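/- arXiv:2005.06285 — 2 statements merged into one kernel-verified Lean document; each statement's English description precedes it below -/
import Mathlib

section
/- For every pushdown system P = (Q, Γ, A, Δ) in push-pop normal form, all p, q ∈ Q and all X, Y ∈ Γ: if pX →* qY, then Dist(pX, qY) ≤ |P|^{|P|⁴+1} − 1. -/
/-- Stack contents: finite (a list in `Γ*`) or infinite (a stream, used for `αβ^ω`). -/
def SC (Γ : Type) : Type := List Γ ⊕ Stream' Γ

namespace SC

/-- Put one symbol on top of a stack content. -/
def cons {Γ : Type} (X : Γ) : SC Γ → SC Γ
  | Sum.inl l => Sum.inl (X :: l)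
  | Sum.inr s => Sum.inr (Stream'.cons X s)

/-- Put a finite word on top of a stack content. -/
def push {Γ : Type} (γ : List Γ) : SC Γ → SC Γ
  | Sum.inl l => Sum.inl (γ ++ l)
  | Sum.inr s => Sum.inr (Stream'.appendStream' γ s)

end SC

/-- `listPow β i = β^i`, the `i`-fold concatenation of `β`. -/
def listPow {Γ : Type} (β : List Γ) : ℕ → List Γ
  | 0 => []
  | n + 1 => β ++ listPow β n

/-- The infinite stack content `β^ω` (for nonempty `β`). -/
def cycSC {Γ : Type} (β : List Γ) (h : β ≠ []) : SC Γ := Sum.inr (Stream'.cycle β h)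

/-- A pushdown system, given by its (finite) transition relation
`Δ ⊆ Q × Γ × A × Q × Γ*`. -/
structure PDS (Q Γ A : Type) where
  Δ : Finset (Q × Γ × A × Q × List Γ)

namespace PDS

variable {Q Γ A : Type}

/-- The size `|P| = |Q| + |Γ| + |A| + |Δ|` of a pushdown system. -/
def size (P : PDS Q Γ A) [Fintype Q] [Fintype Γ] [Fintype A] : ℕ :=
  Fintype.card Q + Fintype.card Γ + Fintype.card A + P.Δ.card

/-- Push-pop normal form: every transition pushes a word of length at most 2. -/
def PushPop (P : PDS Q Γ A) : Prop := ∀ δ ∈ P.Δ, δ.2.2.2.2.length ≤ 2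

/-- The `a`-labeled step relation on configurations: `pXσ →_a qγσ`. -/
def Step (P : PDS Q Γ A) (a : A) (s t : Q × SC Γ) : Prop :=
  ∃ p X q γ σ, (p, X, a, q, γ) ∈ P.Δ ∧ s = (p, SC.cons X σ) ∧ t = (q, SC.push γ σ)

/-- A step with some label. -/
def StepAny (P : PDS Q Γ A) (s t : Q × SC Γ) : Prop := ∃ a, P.Step a s t

/-- Reachability `→*`. -/
def Reach (P : PDS Q Γ A) : (Q × SC Γ) → (Q × SC Γ) → Prop :=
  Relation.ReflTransGen P.StepAny

/-- `StepN P n s t` : there is a path of length exactly `n` from `s` to `t`. -/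
def StepN (P : PDS Q Γ A) : ℕ → (Q × SC Γ) → (Q × SC Γ) → Prop
  | 0, s, t => s = t
  | n + 1, s, t => ∃ u, P.StepAny s u ∧ StepN P n u t

/-- `R` is a bisimulation. -/
def IsBisim (P : PDS Q Γ A) (R : (Q × SC Γ) → (Q × SC Γ) → Prop) : Prop :=
  ∀ s t, R s t → ∀ a,
    (∀ s', P.Step a s s' → ∃ t', P.Step a t t' ∧ R s' t') ∧
    (∀ t', P.Step a t t' → ∃ s', P.Step a s s' ∧ R s' t')

/-- Bisimilarity `s ∼ t`. -/
def Bisim (P : PDS Q Γ A) (s t : Q × SC Γ) : Prop := ∃ R, P.IsBisim R ∧ R s t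

/-- `eats_α(T) = { r | ∃ q ∈ T, qα →* r }`. -/
def eats (P : PDS Q Γ A) (α : List Γ) (T : Set Q) : Set Q :=
  {r | ∃ q ∈ T, P.Reach (q, Sum.inl α) (r, Sum.inl ([] : List Γ))}

/-- `(α, β)` (with `β` nonempty) is a linked pair if `eats_α = eats_{αβ}`
and `eats_β = eats_{ββ}`. -/
def LinkedPair (P : PDS Q Γ A) (α β : List Γ) : Prop :=
  β ≠ [] ∧ P.eats α = P.eats (α ++ β) ∧ P.eats β = P.eats (β ++ β)

/-- Applying one concrete transition `δ = (p, X, a, q, γ)`. -/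
def TStep (P : PDS Q Γ A) (δ : Q × Γ × A × Q × List Γ) (s t : Q × SC Γ) : Prop :=
  δ ∈ P.Δ ∧ ∃ σ, s = (δ.1, SC.cons δ.2.1 σ) ∧ t = (δ.2.2.2.1, SC.push δ.2.2.2.2 σ)

/-- `RunTo P ρ s t` : applying the sequence of transitions `ρ` starting from `s`
yields `t`. -/
def RunTo (P : PDS Q Γ A) : List (Q × Γ × A × Q × List Γ) → (Q × SC Γ) → (Q × SC Γ) → Prop
  | [], s, t => s = t
  | δ :: ρ, s, t => ∃ u, P.TStep δ s u ∧ RunTo P ρ u t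

/-- Bisimulation classes of configurations reachable from `s₀`
(the states of the bisimulation quotient of `L(P, s₀)`). -/
def classes (P : PDS Q Γ A) (s₀ : Q × SC Γ) : Set (Set (Q × SC Γ)) :=
  {c | ∃ s, P.Reach s₀ s ∧ c = {t | P.Reach s₀ t ∧ P.Bisim s t}}

/-- The `a`-labeled step relation on bisimulation classes. -/
def classStep (P : PDS Q Γ A) (a : A) (c d : Set (Q × SC Γ)) : Prop :=
  ∃ s ∈ c, ∃ t ∈ d, P.Step a s t

end PDS

/-- `StackGrowth` of a single transition: `|γ| − 1`. -/
def tGrowth {Q Γ A : Type} (δ : Q × Γ × A × Q × List Γ) : ℤ := (δ.2.2.2.2.length : ℤ) - 1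

/-- `StackGrowth` of a run. -/
def runGrowth {Q Γ A : Type} (ρ : List (Q × Γ × A × Q × List Γ)) : ℤ := (ρ.map tGrowth).sum

/-- A run is augmenting if every prefix has nonnegative stack growth. -/
def Augmenting {Q Γ A : Type} (ρ : List (Q × Γ × A × Q × List Γ)) : Prop :=
  ∀ i ≤ ρ.length, 0 ≤ runGrowth (ρ.take i)

/-- A digging sequence `(r 0, …, r h)` for `(q, α, β)`. -/
def DiggingSeq {Q Γ A : Type} (P : PDS Q Γ A) (q : Q) (α β : List Γ)
    (h : ℕ) (r : ℕ → Q) : Prop :=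
  r 0 ∈ P.eats α {q} ∧ ∀ d, 1 ≤ d → d ≤ h → r d ∈ P.eats β {r (d - 1)}

/-- A `β^ω`-avoiding digging sequence `(r 0, …, r h)` for `(q, α, β)`,
with respect to the configuration `qαβ^eγ` (where `e ≥ 1`). -/
def Avoiding {Q Γ A : Type} (P : PDS Q Γ A) (q : Q) (α β γ : List Γ) (hβ : β ≠ [])
    (e h : ℕ) (r : ℕ → Q) : Prop :=
  DiggingSeq P q α β h r ∧
  (∃ r' ∈ P.eats β {r 0},
      ¬ P.Bisim (r', Sum.inl (listPow β (e - 1) ++ γ)) (r', cycSC β hβ)) ∧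
  ∀ d, 1 ≤ d → d ≤ h →
    ¬ P.Bisim (r d, Sum.inl (listPow β (e - d) ++ γ)) (r d, cycSC β hβ)

/-- The class of elementary functions `ℕ^k → ℕ`: the smallest class containing
constants, projections, addition, multiplication and exponentiation, and closed
under composition. -/
inductive ElementaryFun : {k : ℕ} → ((Fin k → ℕ) → ℕ) → Prop
  | const {k : ℕ} (c : ℕ) : ElementaryFun (fun _ : Fin k → ℕ => c)
  | proj {k : ℕ} (i : Fin k) : ElementaryFun (fun v : Fin k → ℕ => v i)
  | add : ElementaryFun (fun v : Fin 2 → ℕ => v 0 + v 1)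
  | mul : ElementaryFun (fun v : Fin 2 → ℕ => v 0 * v 1)
  | exp : ElementaryFun (fun v : Fin 2 → ℕ => v 0 ^ v 1)
  | comp {k m : ℕ} (f : (Fin m → ℕ) → ℕ) (g : Fin m → (Fin k → ℕ) → ℕ) :
      ElementaryFun f → (∀ i, ElementaryFun (g i)) →
      ElementaryFun (fun v : Fin k → ℕ => f (fun i => g i v))

/-- A binary function `ℕ² → ℕ` is elementary. -/
def Elementary2 (φ : ℕ → ℕ → ℕ) : Prop :=
  ElementaryFun (fun v : Fin 2 → ℕ => φ (v 0) (v 1))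

/-- A ternary function `ℕ³ → ℕ` is elementary. -/
def Elementary3 (φ : ℕ → ℕ → ℕ → ℕ) : Prop :=
  ElementaryFun (fun v : Fin 3 → ℕ => φ (v 0) (v 1) (v 2))

/-- `prodSeg w i len = w (i+1) * w (i+2) * ⋯ * w (i+len+1)` in a semigroup. -/
def prodSeg {S : Type} [Semigroup S] (w : ℕ → S) (i : ℕ) : ℕ → S
  | 0 => w (i + 1)
  | len + 1 => prodSeg w i len * w (i + len + 2)

/-- `catSeg α i len = α (i+1) ++ α (i+2) ++ ⋯ ++ α (i+len+1)`. -/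
def catSeg {Γ : Type} (α : ℕ → List Γ) (i : ℕ) : ℕ → List Γ
  | 0 => α (i + 1)
  | len + 1 => catSeg α i len ++ α (i + len + 2)

/-! A triple `(p, X, q)` is *poppable* if `pX →* q` with empty stack. The poppable triples form
the least fixed point of a monotone saturation operator on `Set (Q × Γ × Q)`, which is reached
after `|Q × Γ × Q|` rounds; a triple added in round `k` has a derivation tree of height `k`, binary
by the push-pop normal form, hence a pop run with at most `2 ^ k - 1` steps. A run `pX →* qY` is a
sequence of moves of its bottom symbol: a transition pushing one symbol, or one pushing two symbols
followed by a pop of the upper one. The same saturation argument on `Set (Q × Γ)` bounds the number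
of such moves by `|Q × Γ|`, so `Dist(pX, qY) ≤ |Q| |Γ| 2 ^ (|Q|² |Γ|) ≤ |P| ^ (|P| ^ 4 + 1) - 1`. -/

theorem Monotone.isFixedPt_iterate_natCard_empty {T : Type*} [Finite T] {F : Set T → Set T}
    (hF : Monotone F) : Function.IsFixedPt F (F^[Nat.card T] ∅) := by
  have hchain : Monotone fun k => F^[k] ∅ := hF.monotone_iterate_of_le_map (Set.empty_subset _)
  have hstab : ∀ m, (F^[m] ∅).ncard = (F^[m + 1] ∅).ncard →
      (F^[m + 1] ∅).ncard = (F^[m + 2] ∅).ncard := by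
    intro m hm
    have heq : F^[m] ∅ = F^[m + 1] ∅ :=
      Set.eq_of_subset_of_ncard_le (hchain m.le_succ) hm.ge
    have hfix : F^[m + 2] ∅ = F^[m + 1] ∅ := by
      rw [Function.iterate_succ_apply' F (m + 1), ← heq, ← Function.iterate_succ_apply' F m, heq]
    rw [hfix]
  have hcard := Nat.stabilises_of_monotone (fun _ _ hij => Set.ncard_le_ncard (hchain hij))
    (fun m => Set.ncard_le_card _) hstab (Nat.le_succ (Nat.card T))
  show F (F^[Nat.card T] ∅) = F^[Nat.card T] ∅
  rw [← Function.iterate_succ_apply' F]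
  exact (Set.eq_of_subset_of_ncard_le (hchain (Nat.le_succ _)) hcard.le).symm

namespace PDS

variable {Q Γ A : Type} {P : PDS Q Γ A}

theorem stepN_add {m n : ℕ} {s u t : Q × SC Γ} (h₁ : P.StepN m s u) (h₂ : P.StepN n u t) :
    P.StepN (m + n) s t := by
  induction m generalizing s with
  | zero => cases h₁; simpa using h₂
  | succ m ih =>
    obtain ⟨v, hsv, hvu⟩ := h₁
    rw [Nat.succ_add]
    exact ⟨v, hsv, ih hvu⟩

theorem exists_stepN_of_reach {s t : Q × SC Γ} (h : P.Reach s t) : ∃ m, P.StepN m s t := by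
  induction h using Relation.ReflTransGen.head_induction_on with
  | refl => exact ⟨0, rfl⟩
  | head hsu _ ih =>
    obtain ⟨m, hm⟩ := ih
    exact ⟨m + 1, _, hsu, hm⟩

theorem stepAny_inl_iff {p : Q} {L : List Γ} {t : Q × SC Γ} :
    P.StepAny (p, Sum.inl L) t ↔ ∃ X l a q γ, (p, X, a, q, γ) ∈ P.Δ ∧ L = X :: l ∧
      t = (q, Sum.inl (γ ++ l)) := by
  constructor
  · rintro ⟨a, p', X, q, γ, σ, hδ, hs, rfl⟩
    rcases σ with l | σ
    · obtain ⟨rfl, hL⟩ := Prod.mk.inj hs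
      exact ⟨X, l, a, q, γ, hδ, Sum.inl.inj hL, rfl⟩
    · exact (Sum.inl_ne_inr (Prod.mk.inj hs).2).elim
  · rintro ⟨X, l, a, q, γ, hδ, rfl, rfl⟩
    exact ⟨a, p, X, q, γ, Sum.inl l, hδ, rfl, rfl⟩

theorem stepN_succ_cons_iff {m : ℕ} {p : Q} {X : Γ} {l : List Γ} {t : Q × SC Γ} :
    P.StepN (m + 1) (p, Sum.inl (X :: l)) t ↔
      ∃ a q γ, (p, X, a, q, γ) ∈ P.Δ ∧ P.StepN m (q, Sum.inl (γ ++ l)) t := by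
  simp only [StepN, stepAny_inl_iff, List.cons.injEq]
  constructor
  · rintro ⟨_, ⟨X, l, a, q, γ, hδ, ⟨rfl, rfl⟩, rfl⟩, h⟩
    exact ⟨a, q, γ, hδ, h⟩
  · rintro ⟨a, q, γ, hδ, h⟩
    exact ⟨_, ⟨X, l, a, q, γ, hδ, ⟨rfl, rfl⟩, rfl⟩, h⟩

theorem not_stepN_succ_nil {m : ℕ} {p : Q} {t : Q × SC Γ} :
    ¬ P.StepN (m + 1) (p, Sum.inl []) t := by
  rintro ⟨_, hstep, -⟩
  obtain ⟨X, l, -, -, -, -, hnil, -⟩ := stepAny_inl_iff.1 hstep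
  cases hnil

theorem eq_of_stepN_nil {m : ℕ} {p : Q} {t : Q × SC Γ} (h : P.StepN m (p, Sum.inl []) t) :
    t = (p, Sum.inl []) := by
  cases m with
  | zero => exact h.symm
  | succ m => exact (not_stepN_succ_nil h).elim

theorem StepN.append_right {m : ℕ} {p q : Q} {α β : List Γ} (τ : List Γ)
    (h : P.StepN m (p, Sum.inl α) (q, Sum.inl β)) :
    P.StepN m (p, Sum.inl (α ++ τ)) (q, Sum.inl (β ++ τ)) := by
  induction m generalizing p α with
  | zero => cases h; rfl
  | succ m ih =>
    cases α with
    | nil => exact (not_stepN_succ_nil h).elim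
    | cons X l =>
      obtain ⟨a, q', γ, hδ, h⟩ := stepN_succ_cons_iff.1 h
      exact stepN_succ_cons_iff.2 ⟨a, q', γ, hδ, by simpa using ih h⟩

theorem exists_stepN_pop_of_stepN_append {m : ℕ} {p q : Q} {α β τ : List Γ} (hα : α ≠ [])
    (hτ : τ.length ≤ β.length) (h : P.StepN m (p, Sum.inl (α ++ β)) (q, Sum.inl τ)) :
    ∃ r m₁ m₂, m = m₁ + m₂ ∧ P.StepN m₁ (p, Sum.inl α) (r, Sum.inl []) ∧
      P.StepN m₂ (r, Sum.inl β) (q, Sum.inl τ) := by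
  induction m generalizing p α with
  | zero =>
    have hlen : (α ++ β).length = τ.length := by rw [Sum.inl.inj (congrArg Prod.snd h)]
    have := List.length_pos_of_ne_nil hα
    rw [List.length_append] at hlen
    omega
  | succ m ih =>
    obtain ⟨X, α', rfl⟩ := List.exists_cons_of_ne_nil hα
    obtain ⟨a, q', γ, hδ, h⟩ := stepN_succ_cons_iff.1 h
    by_cases hγα : γ ++ α' = []
    · obtain ⟨rfl, rfl⟩ := List.append_eq_nil_iff.1 hγα
      exact ⟨q', 1, m, by omega, stepN_succ_cons_iff.2 ⟨a, q', [], hδ, rfl⟩, h⟩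
    · obtain ⟨r, m₁, m₂, rfl, h₁, h₂⟩ := ih hγα (by rw [List.append_assoc]; exact h)
      exact ⟨r, m₁ + 1, m₂, by omega, stepN_succ_cons_iff.2 ⟨a, q', γ, hδ, h₁⟩, h₂⟩

def ReachWithin (P : PDS Q Γ A) (B : ℕ) (s t : Q × SC Γ) : Prop := ∃ m ≤ B, P.StepN m s t

namespace ReachWithin

variable {B B₁ B₂ : ℕ} {p q : Q} {s u t : Q × SC Γ}

theorem refl (s : Q × SC Γ) : P.ReachWithin 0 s s := ⟨0, le_rfl, rfl⟩

theorem trans (h₁ : P.ReachWithin B₁ s u) (h₂ : P.ReachWithin B₂ u t) :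
    P.ReachWithin (B₁ + B₂) s t := by
  obtain ⟨m₁, hm₁, h₁⟩ := h₁
  obtain ⟨m₂, hm₂, h₂⟩ := h₂
  exact ⟨m₁ + m₂, by omega, stepN_add h₁ h₂⟩

theorem mono (hB : B₁ ≤ B₂) (h : P.ReachWithin B₁ s t) : P.ReachWithin B₂ s t := by
  obtain ⟨m, hm, h⟩ := h
  exact ⟨m, hm.trans hB, h⟩

theorem append_right {α β : List Γ} (τ : List Γ)
    (h : P.ReachWithin B (p, Sum.inl α) (q, Sum.inl β)) :
    P.ReachWithin B (p, Sum.inl (α ++ τ)) (q, Sum.inl (β ++ τ)) := by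
  obtain ⟨m, hm, h⟩ := h
  exact ⟨m, hm, h.append_right τ⟩

theorem cons_of_mem {X : Γ} {a : A} {γ l : List Γ} (hδ : (p, X, a, q, γ) ∈ P.Δ)
    (h : P.ReachWithin B (q, Sum.inl (γ ++ l)) t) :
    P.ReachWithin (1 + B) (p, Sum.inl (X :: l)) t := by
  obtain ⟨m, hm, h⟩ := h
  exact ⟨m + 1, by omega, stepN_succ_cons_iff.2 ⟨a, q, γ, hδ, h⟩⟩

end ReachWithin

def PopsWord (S : Set (Q × Γ × Q)) : Q → List Γ → Q → Prop
  | p, [], q => p = q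
  | p, X :: γ, q => ∃ r, (p, X, r) ∈ S ∧ PopsWord S r γ q

theorem PopsWord.mono {S T : Set (Q × Γ × Q)} (hST : S ⊆ T) :
    ∀ {p : Q} {γ : List Γ} {q : Q}, PopsWord S p γ q → PopsWord T p γ q
  | _, [], _, h => h
  | _, _ :: _, _, ⟨r, hr, h⟩ => ⟨r, hST hr, h.mono hST⟩

def popLayer (P : PDS Q Γ A) (S : Set (Q × Γ × Q)) : Set (Q × Γ × Q) :=
  {t | ∃ a q' γ, (t.1, t.2.1, a, q', γ) ∈ P.Δ ∧ PopsWord S q' γ t.2.2}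

theorem monotone_popLayer : Monotone P.popLayer := by
  rintro S T hST t ⟨a, q', γ, hδ, h⟩
  exact ⟨a, q', γ, hδ, h.mono hST⟩

theorem reachWithin_of_popsWord {S : Set (Q × Γ × Q)} {B : ℕ}
    (hS : ∀ p X q, (p, X, q) ∈ S → P.ReachWithin B (p, Sum.inl [X]) (q, Sum.inl [])) :
    ∀ {p : Q} {γ : List Γ} {q : Q}, PopsWord S p γ q →
      P.ReachWithin (γ.length * B) (p, Sum.inl γ) (q, Sum.inl [])
  | _, [], _, rfl => (ReachWithin.refl _).mono (Nat.zero_le _)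
  | _, X :: γ, _, ⟨r, hr, h⟩ => by
    have := ((hS _ _ _ hr).append_right γ).trans (reachWithin_of_popsWord hS h)
    rw [List.length_cons, add_one_mul, add_comm]
    simpa using this

theorem reachWithin_of_mem_iterate_popLayer (hP : P.PushPop) :
    ∀ (k : ℕ) {p : Q} {X : Γ} {q : Q}, (p, X, q) ∈ P.popLayer^[k] ∅ →
      P.ReachWithin (2 ^ k - 1) (p, Sum.inl [X]) (q, Sum.inl [])
  | 0, _, _, _, h => h.elim
  | k + 1, p, X, q, h => by
    rw [Function.iterate_succ_apply'] at h
    obtain ⟨a, q', γ, hδ, hγ⟩ := h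
    have hlen : γ.length ≤ 2 := hP _ hδ
    have hpow : 1 ≤ 2 ^ k := Nat.one_le_two_pow
    refine (ReachWithin.cons_of_mem (l := []) hδ ?_).mono (B₁ := 1 + γ.length * (2 ^ k - 1)) ?_
    · simpa using
        reachWithin_of_popsWord (fun _ _ _ => reachWithin_of_mem_iterate_popLayer hP k) hγ
    · have := Nat.mul_le_mul_right (2 ^ k - 1) hlen
      rw [pow_succ]
      omega

theorem popsWord_of_stepN {S : Set (Q × Γ × Q)} (hS : P.popLayer S ⊆ S) (m : ℕ) :
    ∀ {p : Q} {γ : List Γ} {q : Q},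
      P.StepN m (p, Sum.inl γ) (q, Sum.inl []) → PopsWord S p γ q := by
  induction m using Nat.strong_induction_on with
  | _ m ih =>
  rintro p (_ | ⟨X, γ⟩) q h
  · exact (Prod.mk.inj (eq_of_stepN_nil h)).1.symm
  obtain ⟨r, _ | m₁, m₂, rfl, h₁, h₂⟩ :=
    exists_stepN_pop_of_stepN_append (α := [X]) (List.cons_ne_nil _ _) (Nat.zero_le _) h
  · cases List.cons_ne_nil _ _ (Sum.inl.inj (Prod.mk.inj h₁).2)
  obtain ⟨a, q', β, hδ, h₁⟩ := stepN_succ_cons_iff.1 h₁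
  exact ⟨r, hS ⟨a, q', β, hδ, ih m₁ (by omega) (by simpa using h₁)⟩, ih m₂ (by omega) h₂⟩

theorem reachWithin_of_stepN_pop [Finite Q] [Finite Γ] (hP : P.PushPop) {m : ℕ} {p q : Q}
    {X : Γ} (h : P.StepN m (p, Sum.inl [X]) (q, Sum.inl [])) :
    P.ReachWithin (2 ^ Nat.card (Q × Γ × Q) - 1) (p, Sum.inl [X]) (q, Sum.inl []) := by
  have hfix := (monotone_popLayer (P := P)).isFixedPt_iterate_natCard_empty
  obtain ⟨r, hr, rfl⟩ := popsWord_of_stepN hfix.eq.subset m h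
  exact reachWithin_of_mem_iterate_popLayer hP _ hr

def HeadStep (P : PDS Q Γ A) (B : ℕ) (s t : Q × Γ) : Prop :=
  ∃ a, (s.1, s.2, a, t.1, [t.2]) ∈ P.Δ ∨
    ∃ q' Z, (s.1, s.2, a, q', [Z, t.2]) ∈ P.Δ ∧ P.ReachWithin B (q', Sum.inl [Z]) (t.1, Sum.inl [])

def headLayer (P : PDS Q Γ A) (B : ℕ) (b : Q × Γ) (R : Set (Q × Γ)) : Set (Q × Γ) :=
  insert b {s | ∃ t ∈ R, P.HeadStep B s t}

theorem monotone_headLayer (B : ℕ) (b : Q × Γ) : Monotone (P.headLayer B b) :=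
  fun _ _ hRT => Set.insert_subset_insert fun _ ⟨t, ht, hst⟩ => ⟨t, hRT ht, hst⟩

theorem reachWithin_of_mem_iterate_headLayer {B : ℕ} {b : Q × Γ} :
    ∀ (k : ℕ) {s : Q × Γ}, s ∈ (P.headLayer B b)^[k] ∅ →
      P.ReachWithin (k * (B + 1)) (s.1, Sum.inl [s.2]) (b.1, Sum.inl [b.2])
  | 0, _, h => h.elim
  | k + 1, s, h => by
    rw [Function.iterate_succ_apply'] at h
    rcases h with rfl | ⟨t, ht, a, hδ | ⟨q', Z, hδ, hpop⟩⟩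
    · exact (ReachWithin.refl _).mono (Nat.zero_le _)
    · refine (ReachWithin.cons_of_mem (l := []) hδ
        (reachWithin_of_mem_iterate_headLayer k ht)).mono ?_
      rw [add_one_mul]
      omega
    · have hpop' := (hpop.append_right [t.2]).trans (reachWithin_of_mem_iterate_headLayer k ht)
      refine (ReachWithin.cons_of_mem (l := []) hδ hpop').mono ?_
      rw [add_one_mul]
      omega

theorem mem_of_stepN_head (hP : P.PushPop) {B : ℕ} {b : Q × Γ} {R : Set (Q × Γ)}
    (hpop : ∀ {m p X q}, P.StepN m (p, Sum.inl [X]) (q, Sum.inl []) →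
      P.ReachWithin B (p, Sum.inl [X]) (q, Sum.inl []))
    (hR : P.headLayer B b R ⊆ R) (m : ℕ) :
    ∀ {p : Q} {X : Γ}, P.StepN m (p, Sum.inl [X]) (b.1, Sum.inl [b.2]) → (p, X) ∈ R := by
  induction m using Nat.strong_induction_on with
  | _ m ih =>
  intro p X h
  rcases m with _ | m
  · obtain ⟨hp, hX⟩ := Prod.mk.inj h
    obtain rfl : (p, X) = b := Prod.ext hp (List.singleton_inj.1 (Sum.inl.inj hX))
    exact hR (Set.mem_insert _ _)
  obtain ⟨a, q', γ, hδ, h⟩ := stepN_succ_cons_iff.1 h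
  rw [List.append_nil] at h
  refine hR (Set.mem_insert_of_mem _ ?_)
  rcases γ with _ | ⟨Z, _ | ⟨W, _ | ⟨_, _⟩⟩⟩
  · cases List.cons_ne_nil _ _ (Sum.inl.inj (Prod.mk.inj (eq_of_stepN_nil h)).2)
  · exact ⟨(q', Z), ih m m.lt_succ_self h, a, Or.inl hδ⟩
  · obtain ⟨r, m₁, m₂, rfl, h₁, h₂⟩ := exists_stepN_pop_of_stepN_append (α := [Z]) (β := [W])
      (List.cons_ne_nil _ _) (by simp) h
    exact ⟨(r, W), ih m₂ (by omega) h₂, a, Or.inr ⟨q', Z, hδ, hpop h₁⟩⟩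
  · have := hP _ hδ
    simp at this

theorem reachWithin_of_stepN_head [Finite Q] [Finite Γ] (hP : P.PushPop) {m : ℕ} {p q : Q}
    {X Y : Γ} (h : P.StepN m (p, Sum.inl [X]) (q, Sum.inl [Y])) :
    P.ReachWithin (Nat.card (Q × Γ) * 2 ^ Nat.card (Q × Γ × Q))
      (p, Sum.inl [X]) (q, Sum.inl [Y]) := by
  set B := 2 ^ Nat.card (Q × Γ × Q) - 1
  have hB : B + 1 = 2 ^ Nat.card (Q × Γ × Q) := Nat.sub_add_cancel Nat.one_le_two_pow
  have hfix := (monotone_headLayer (P := P) B (q, Y)).isFixedPt_iterate_natCard_empty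
  have hmem := mem_of_stepN_head hP (reachWithin_of_stepN_pop hP) hfix.eq.subset m h
  simpa only [hB] using reachWithin_of_mem_iterate_headLayer _ hmem

end PDS

theorem mul_two_pow_le_pow_pow_four {a g n : ℕ} (hn : 2 ≤ n) (ha : a ≤ n) (hg : g ≤ n) :
    a * g * 2 ^ (a * (g * a)) ≤ n ^ (n ^ 4 + 1) - 1 := by
  have hcube : a * (g * a) ≤ n ^ 3 := by
    calc a * (g * a) ≤ n * (n * n) := by gcongr
      _ = n ^ 3 := by ring
  have hexp : n ^ 3 + 2 < n ^ 4 + 1 := by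
    have : 8 ≤ n ^ 3 := by simpa using Nat.pow_le_pow_left hn 3
    nlinarith [pow_succ n 3]
  refine Nat.le_sub_one_of_lt ?_
  calc a * g * 2 ^ (a * (g * a)) ≤ n ^ 2 * 2 ^ n ^ 3 := by
        gcongr
        · nlinarith
        · norm_num
    _ ≤ n ^ 2 * n ^ n ^ 3 := by gcongr
    _ = n ^ (n ^ 3 + 2) := by ring
    _ < n ^ (n ^ 4 + 1) := Nat.pow_lt_pow_right hn hexp

/-- For a PDS in push-pop normal form: if `pX →* qY` (single stack symbols), then
`Dist(pX, qY) ≤ |P|^(|P|^4 + 1) − 1`. -/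
theorem stmt_6 (Q Γ A : Type) [Fintype Q] [Fintype Γ] [Fintype A]
    (P : PDS Q Γ A) (hpp : P.PushPop) (p q : Q) (X Y : Γ)
    (hreach : P.Reach (p, Sum.inl [X]) (q, Sum.inl [Y])) :
    ∃ m : ℕ, P.StepN m (p, Sum.inl [X]) (q, Sum.inl [Y]) ∧
      m ≤ P.size ^ (P.size ^ 4 + 1) - 1 := by
  obtain ⟨m₀, h₀⟩ := PDS.exists_stepN_of_reach hreach
  obtain ⟨m, hm, h⟩ := PDS.reachWithin_of_stepN_head hpp h₀
  refine ⟨m, h, hm.trans ?_⟩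
  have hQ : 0 < Fintype.card Q := Fintype.card_pos_iff.2 ⟨p⟩
  have hΓ : 0 < Fintype.card Γ := Fintype.card_pos_iff.2 ⟨X⟩
  simp only [Nat.card_eq_fintype_card, Fintype.card_prod]
  exact mul_two_pow_le_pow_pow_four (n := P.size) (by unfold PDS.size; omega)
    (by unfold PDS.size; omega) (by unfold PDS.size; omega)
end

section
/- For every pushdown system P = (Q, Γ, A, Δ), every U ⊆ Q, every β ∈ Γ⁺, every γ ∈ RegStr(Γ), and all i, j ∈ ℕ: if eats_β(U) ⊆ U, and rβ^iγ ∼ rβ^jγ for all r ∈ U, and i ≠ j, then rβ^iγ ∼ rβ^jγ ∼ rβ^ω for all r ∈ U. -/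
/-!
Say `i < j`, and write `b = β^iγ` and `w = β^(j-i)`, so that `rb ∼ rwb` for `r ∈ U`, while
`wβ^ω = β^ω`. The relation pairing `qσb` with `qσβ^ω`, for every finite `σ` that can only be popped
into `U`, is a bisimulation up to `∼`: while `σ` is nonempty both sides have the same moves, since a
move only reads the top symbol, and once `σ` has been popped, in a state of `U`, the hypothesis lets
us replace `b` by `wb` and `β^ω` by `wβ^ω`, putting a nonempty `σ = w` back on top.
-/

variable {Q Γ A : Type}

namespace SC

@[simp]
lemma push_nil (σ : SC Γ) : push [] σ = σ := by
  cases σ <;> simp [push] <;> rfl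

lemma push_push (α β : List Γ) (σ : SC Γ) : push α (push β σ) = push (α ++ β) σ := by
  cases σ <;> simp [push] <;> rfl

lemma push_cons (X : Γ) (α : List Γ) (σ : SC Γ) : push (X :: α) σ = cons X (push α σ) := by
  cases σ <;> simp [push, cons, Stream'.cons_append_stream] <;> rfl

lemma push_inl (α β : List Γ) : push α (Sum.inl β : SC Γ) = (Sum.inl (α ++ β) : SC Γ) := rfl

lemma cons_injective2 : Function.Injective2 (cons : Γ → SC Γ → SC Γ) := by
  rintro X Y (σ | σ) (τ | τ) h <;> simp only [cons] at h
  · cases h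
    exact ⟨rfl, rfl⟩
  · cases h
  · cases h
  · injection h with h
    obtain ⟨rfl, rfl⟩ := Stream'.cons_injective2 h
    exact ⟨rfl, rfl⟩

end SC

lemma listPow_add (β : List Γ) (m n : ℕ) : listPow β (m + n) = listPow β m ++ listPow β n := by
  induction m with
  | zero => simp [listPow]
  | succ m ih => rw [Nat.add_right_comm, listPow, listPow, ih, List.append_assoc]

lemma listPow_succ_ne_nil {β : List Γ} (hβ : β ≠ []) (n : ℕ) : listPow β (n + 1) ≠ [] := by
  simp [listPow, hβ]

lemma push_listPow_cycSC (β : List Γ) (hβ : β ≠ []) (n : ℕ) :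
    SC.push (listPow β n) (cycSC β hβ) = cycSC β hβ := by
  induction n with
  | zero => simp [listPow]
  | succ n ih =>
    simp only [listPow, ← SC.push_push, ih]
    simp only [cycSC, SC.push, ← Stream'.cycle_eq]
    rfl

namespace PDS

variable {P : PDS Q Γ A}

lemma step_push_cons_iff {a : A} {q : Q} {X : Γ} {σ : List Γ} {b : SC Γ} {w : Q × SC Γ} :
    P.Step a (q, SC.push (X :: σ) b) w ↔
      ∃ q' δ, (q, X, a, q', δ) ∈ P.Δ ∧ w = (q', SC.push (δ ++ σ) b) := by
  constructor
  · rintro ⟨p, Y, q', δ, τ, hδ, hs, rfl⟩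
    rw [SC.push_cons, Prod.mk.injEq] at hs
    obtain ⟨rfl, hs⟩ := hs
    obtain ⟨rfl, rfl⟩ := SC.cons_injective2 hs
    exact ⟨q', δ, hδ, by rw [SC.push_push]⟩
  · rintro ⟨q', δ, hδ, rfl⟩
    exact ⟨q, X, q', δ, SC.push σ b, hδ, by rw [SC.push_cons], by rw [SC.push_push]⟩

lemma step_inl_cons_iff {a : A} {q : Q} {X : Γ} {σ : List Γ} {w : Q × SC Γ} :
    P.Step a (q, (Sum.inl (X :: σ) : SC Γ)) w ↔
      ∃ q' δ, (q, X, a, q', δ) ∈ P.Δ ∧ w = (q', (Sum.inl (δ ++ σ) : SC Γ)) := by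
  have h := step_push_cons_iff (P := P) (a := a) (q := q) (X := X) (σ := σ) (w := w)
    (b := Sum.inl [])
  simp only [SC.push_inl, List.append_nil] at h
  exact h

lemma not_step_nil (a : A) (q : Q) (w : Q × SC Γ) : ¬ P.Step a (q, Sum.inl []) w := by
  rintro ⟨p, X, q', δ, (σ | σ), -, hs, -⟩ <;> cases hs

lemma eq_of_reach_nil {q : Q} {w : Q × SC Γ} (h : P.Reach (q, Sum.inl []) w) :
    w = (q, Sum.inl []) := by
  rcases h.cases_head with rfl | ⟨u, ⟨a, hstep⟩, -⟩
  · rfl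
  · exact (not_step_nil a q u hstep).elim

lemma reach_nil_of_reach_append {q r : Q} {σ τ : List Γ}
    (h : P.Reach (q, Sum.inl (σ ++ τ)) (r, Sum.inl [])) :
    ∃ r', P.Reach (q, Sum.inl σ) (r', Sum.inl []) ∧ P.Reach (r', Sum.inl τ) (r, Sum.inl []) := by
  generalize hs : ((q, Sum.inl (σ ++ τ)) : Q × SC Γ) = s at h
  induction h using Relation.ReflTransGen.head_induction_on generalizing q σ with
  | refl =>
    injection hs with hq hs
    subst hq
    injection hs with hs
    obtain ⟨rfl, rfl⟩ := List.append_eq_nil_iff.mp hs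
    exact ⟨q, .refl, .refl⟩
  | head hstep hrest ih =>
    subst hs
    cases σ with
    | nil => exact ⟨q, .refl, .head hstep hrest⟩
    | cons X σ =>
      obtain ⟨a, hstep⟩ := hstep
      rw [List.cons_append, step_inl_cons_iff] at hstep
      obtain ⟨q', δ, hδ, rfl⟩ := hstep
      obtain ⟨r', h₁, h₂⟩ := ih (q := q') (σ := δ ++ σ) (by rw [List.append_assoc]; rfl)
      exact ⟨r', .head ⟨a, step_inl_cons_iff.mpr ⟨q', δ, hδ, rfl⟩⟩ h₁, h₂⟩

@[simp]
lemma eats_nil (T : Set Q) : P.eats [] T = T := by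
  ext r
  refine ⟨fun ⟨q, hq, h⟩ => ?_, fun hr => ⟨r, hr, .refl⟩⟩
  obtain rfl : r = q := congrArg Prod.fst (eq_of_reach_nil h)
  exact hq

lemma eats_mono (α : List Γ) {T T' : Set Q} (h : T ⊆ T') : P.eats α T ⊆ P.eats α T' :=
  fun _ ⟨q, hq, hr⟩ => ⟨q, h hq, hr⟩

lemma eats_append_subset (σ τ : List Γ) (T : Set Q) :
    P.eats (σ ++ τ) T ⊆ P.eats τ (P.eats σ T) := fun _ ⟨q, hq, h⟩ =>
  let ⟨r', h₁, h₂⟩ := reach_nil_of_reach_append h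
  ⟨r', ⟨q, hq, h₁⟩, h₂⟩

lemma eats_listPow_subset {U : Set Q} {β : List Γ} (hU : P.eats β U ⊆ U) (n : ℕ) :
    P.eats (listPow β n) U ⊆ U := by
  induction n with
  | zero => simp [listPow]
  | succ n ih => exact (eats_append_subset _ _ _).trans (ih.trans' (eats_mono _ hU))

lemma eats_subset_of_mem_Δ {q q' : Q} {X : Γ} {a : A} {δ : List Γ} (hδ : (q, X, a, q', δ) ∈ P.Δ)
    (σ : List Γ) : P.eats (δ ++ σ) {q'} ⊆ P.eats (X :: σ) {q} := by
  rintro r ⟨x, hx, h⟩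
  rw [Set.mem_singleton_iff.mp hx] at h
  exact ⟨q, rfl, .head ⟨a, step_inl_cons_iff.mpr ⟨q', δ, hδ, rfl⟩⟩ h⟩

namespace Bisim

@[refl]
lemma refl (s : Q × SC Γ) : P.Bisim s s :=
  ⟨Eq, by rintro s _ rfl a; exact ⟨fun s' h => ⟨s', h, rfl⟩, fun t' h => ⟨t', h, rfl⟩⟩, rfl⟩

@[symm]
lemma symm {s t : Q × SC Γ} (h : P.Bisim s t) : P.Bisim t s := by
  obtain ⟨R, hR, hst⟩ := h
  refine ⟨flip R, fun x y hxy a => ?_, hst⟩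
  obtain ⟨h₁, h₂⟩ := hR y x hxy a
  exact ⟨h₂, h₁⟩

@[trans]
lemma trans {s t u : Q × SC Γ} (h₁ : P.Bisim s t) (h₂ : P.Bisim t u) : P.Bisim s u := by
  obtain ⟨R₁, hR₁, h₁⟩ := h₁
  obtain ⟨R₂, hR₂, h₂⟩ := h₂
  refine ⟨Relation.Comp R₁ R₂, ?_, t, h₁, h₂⟩
  rintro x z ⟨y, hxy, hyz⟩ a
  obtain ⟨f₁, b₁⟩ := hR₁ x y hxy a
  obtain ⟨f₂, b₂⟩ := hR₂ y z hyz a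
  constructor
  · intro x' hx
    obtain ⟨y', hy, hxy'⟩ := f₁ x' hx
    obtain ⟨z', hz, hyz'⟩ := f₂ y' hy
    exact ⟨z', hz, y', hxy', hyz'⟩
  · intro z' hz
    obtain ⟨y', hy, hyz'⟩ := b₂ z' hz
    obtain ⟨x', hx, hxy'⟩ := b₁ y' hy
    exact ⟨x', hx, y', hxy', hyz'⟩

lemma exists_step {s t s' : Q × SC Γ} {a : A} (h : P.Bisim s t) (hs : P.Step a s s') :
    ∃ t', P.Step a t t' ∧ P.Bisim s' t' := by
  obtain ⟨R, hR, hst⟩ := h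
  obtain ⟨t', ht, hR'⟩ := (hR s t hst a).1 s' hs
  exact ⟨t', ht, R, hR, hR'⟩

end Bisim

def CommonTop (P : PDS Q Γ A) (U : Set Q) (b c : SC Γ) (s t : Q × SC Γ) : Prop :=
  ∃ q σ, P.eats σ {q} ⊆ U ∧ P.Bisim s (q, SC.push σ b) ∧ P.Bisim t (q, SC.push σ c)

lemma CommonTop.swap {U : Set Q} {b c : SC Γ} {s t : Q × SC Γ} (h : P.CommonTop U b c s t) :
    P.CommonTop U c b t s :=
  let ⟨q, σ, hσ, hs, ht⟩ := h
  ⟨q, σ, hσ, ht, hs⟩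

lemma CommonTop.exists_step_of_cons {U : Set Q} {b c : SC Γ} {s t s' : Q × SC Γ} {a : A}
    {q : Q} {X : Γ} {σ : List Γ} (hσ : P.eats (X :: σ) {q} ⊆ U)
    (hs : P.Bisim s (q, SC.push (X :: σ) b)) (ht : P.Bisim t (q, SC.push (X :: σ) c))
    (hss' : P.Step a s s') : ∃ t', P.Step a t t' ∧ P.CommonTop U b c s' t' := by
  obtain ⟨u, hu, hs'u⟩ := hs.exists_step hss'
  obtain ⟨q', δ, hδ, rfl⟩ := step_push_cons_iff.mp hu
  obtain ⟨t', htt', ht'⟩ := ht.symm.exists_step (step_push_cons_iff.mpr ⟨q', δ, hδ, rfl⟩)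
  exact ⟨t', htt', q', δ ++ σ, (eats_subset_of_mem_Δ hδ σ).trans hσ, hs'u, ht'.symm⟩

section FixedPoint

variable {U : Set Q} {w : List Γ} {b c : SC Γ}

lemma CommonTop.exists_cons (hw : w ≠ []) (hU : P.eats w U ⊆ U) (hc : SC.push w c = c)
    (hb : ∀ r ∈ U, P.Bisim (r, b) (r, SC.push w b)) {s t : Q × SC Γ}
    (h : P.CommonTop U b c s t) :
    ∃ q X σ, P.eats (X :: σ) {q} ⊆ U ∧
      P.Bisim s (q, SC.push (X :: σ) b) ∧ P.Bisim t (q, SC.push (X :: σ) c) := by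
  obtain ⟨q, σ, hσ, hs, ht⟩ := h
  cases σ with
  | cons X σ => exact ⟨q, X, σ, hσ, hs, ht⟩
  | nil =>
    have hq : q ∈ U := hσ (by simp)
    rw [SC.push_nil] at hs ht
    obtain ⟨X, σ, rfl⟩ := List.exists_cons_of_ne_nil hw
    refine ⟨q, X, σ, (eats_mono _ (by simpa using hq)).trans hU, hs.trans (hb q hq), ?_⟩
    rwa [hc]

lemma isBisim_commonTop (hw : w ≠ []) (hU : P.eats w U ⊆ U) (hc : SC.push w c = c)
    (hb : ∀ r ∈ U, P.Bisim (r, b) (r, SC.push w b)) : P.IsBisim (P.CommonTop U b c) := by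
  intro s t h a
  obtain ⟨q, X, σ, hσ, hs, ht⟩ := h.exists_cons hw hU hc hb
  refine ⟨fun s' hss' => CommonTop.exists_step_of_cons hσ hs ht hss', fun t' htt' => ?_⟩
  obtain ⟨s', hss', h'⟩ := CommonTop.exists_step_of_cons hσ ht hs htt'
  exact ⟨s', hss', h'.swap⟩

lemma bisim_of_push_eq_self (hw : w ≠ []) (hU : P.eats w U ⊆ U) (hc : SC.push w c = c)
    (hb : ∀ r ∈ U, P.Bisim (r, b) (r, SC.push w b)) {r : Q} (hr : r ∈ U) :
    P.Bisim (r, b) (r, c) :=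
  ⟨P.CommonTop U b c, isBisim_commonTop hw hU hc hb, r, [], by simpa using hr,
    by rw [SC.push_nil], by rw [SC.push_nil]⟩

end FixedPoint

end PDS

/-- If `eats_β(U) ⊆ U`, and `rβ^iγ ∼ rβ^jγ` for all `r ∈ U`, and `i ≠ j`, then
`rβ^iγ ∼ rβ^jγ ∼ rβ^ω` for all `r ∈ U`. -/
theorem stmt_10 (Q Γ A : Type) (P : PDS Q Γ A) (U : Set Q) (β : List Γ) (hβ : β ≠ [])
    (γ : SC Γ) (i j : ℕ)
    (hU : P.eats β U ⊆ U)
    (hbis : ∀ r ∈ U, P.Bisim (r, SC.push (listPow β i) γ) (r, SC.push (listPow β j) γ))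
    (hij : i ≠ j) :
    ∀ r ∈ U,
      P.Bisim (r, SC.push (listPow β i) γ) (r, cycSC β hβ) ∧
      P.Bisim (r, SC.push (listPow β j) γ) (r, cycSC β hβ) := by
  wlog hlt : i < j generalizing i j
  · intro r hr
    exact (this j i (fun r hr => (hbis r hr).symm) hij.symm (by omega) r hr).symm
  obtain ⟨n, rfl⟩ : ∃ n, j = n + 1 + i := ⟨j - i - 1, by omega⟩
  have hb : ∀ r ∈ U, P.Bisim (r, SC.push (listPow β i) γ)
      (r, SC.push (listPow β (n + 1)) (SC.push (listPow β i) γ)) := by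
    simpa only [listPow_add, SC.push_push] using hbis
  intro r hr
  have hcyc := PDS.bisim_of_push_eq_self (listPow_succ_ne_nil hβ n)
    (PDS.eats_listPow_subset hU _) (push_listPow_cycSC β hβ _) hb hr
  exact ⟨hcyc, (hbis r hr).symm.trans hcyc⟩
end
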